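/- arXiv:2110.02482 — 5 statements merged into one kernel-verified Lean document; each statement's English description precedes it below -/
import Mathlib

section
/- Under alternating gradient descent updates x^{t+1} = x^t + D A y^t with D symmetric positive definite, agent 1's total utility after T+1 updates satisfies sum_{t=0}^{T} ⟨x^{t+1} + x^t, A y^t⟩ = ⟨x^{T+1}, D^{-1} x^{T+1}⟩ - ⟨x^0, D^{-1} x^0⟩ ≥ -⟨x^0, D^{-1} x^0⟩. -/
/-!
With `Φ x = ⟨x, D⁻¹ x⟩`, the update gives `A y^t = D⁻¹ (x^{t+1} - x^t)`, and since `D⁻¹` is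
symmetric, `⟨x^{t+1} + x^t, D⁻¹ (x^{t+1} - x^t)⟩ = Φ x^{t+1} - Φ x^t`. The utilities therefore
telescope, and `Φ x^{T+1} ≥ 0` because `D⁻¹` is positive definite.
-/

open Matrix Finset

section

variable {ι R : Type*} [Fintype ι] [CommRing R]

theorem Matrix.IsSymm.add_dotProduct_mulVec_sub {M : Matrix ι ι R} (hM : M.IsSymm)
    (a b : ι → R) :
    (a + b) ⬝ᵥ (M *ᵥ (a - b)) = a ⬝ᵥ (M *ᵥ a) - b ⬝ᵥ (M *ᵥ b) := by
  have hab : b ⬝ᵥ (M *ᵥ a) = a ⬝ᵥ (M *ᵥ b) := by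
    simpa only [hM.eq] using dotProduct_transpose_mulVec M b a
  rw [mulVec_sub, add_dotProduct, dotProduct_sub, dotProduct_sub, hab]
  ring

variable [DecidableEq ι] {D : Matrix ι ι R}

theorem Matrix.IsSymm.add_dotProduct_eq_sub_of_eq_add_mulVec (hD : D.IsSymm)
    (hdet : IsUnit D.det) {x x' g : ι → R} (h : x' = x + D *ᵥ g) :
    (x' + x) ⬝ᵥ g = x' ⬝ᵥ (D⁻¹ *ᵥ x') - x ⬝ᵥ (D⁻¹ *ᵥ x) := by
  have hg : g = D⁻¹ *ᵥ (x' - x) := by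
    rw [h, add_sub_cancel_left, mulVec_mulVec, nonsing_inv_mul D hdet, one_mulVec]
  rw [hg]
  exact hD.inv.add_dotProduct_mulVec_sub x' x

theorem Matrix.IsSymm.sum_range_add_dotProduct_eq_sub (hD : D.IsSymm) (hdet : IsUnit D.det)
    {x g : ℕ → ι → R} (hx : ∀ t, x (t + 1) = x t + D *ᵥ g t) (N : ℕ) :
    ∑ t ∈ range N, (x (t + 1) + x t) ⬝ᵥ g t =
      x N ⬝ᵥ (D⁻¹ *ᵥ x N) - x 0 ⬝ᵥ (D⁻¹ *ᵥ x 0) := by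
  rw [← sum_range_sub (fun t => x t ⬝ᵥ (D⁻¹ *ᵥ x t))]
  exact sum_congr rfl fun t _ => hD.add_dotProduct_eq_sub_of_eq_add_mulVec hdet (hx t)

end

theorem altGD_utility_identity {n m : ℕ}
    (D : Matrix (Fin n) (Fin n) ℝ) (hD : D.PosDef)
    (A : Matrix (Fin n) (Fin m) ℝ)
    (y : ℕ → Fin m → ℝ) (xs : ℕ → Fin n → ℝ)
    (hupd : ∀ t, xs (t + 1) = xs t + D *ᵥ (A *ᵥ y t)) (T : ℕ) :
    (∑ t ∈ Finset.range (T + 1), (xs (t + 1) + xs t) ⬝ᵥ (A *ᵥ y t) =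
      xs (T + 1) ⬝ᵥ (D⁻¹ *ᵥ xs (T + 1)) - xs 0 ⬝ᵥ (D⁻¹ *ᵥ xs 0)) ∧
    (-(xs 0 ⬝ᵥ (D⁻¹ *ᵥ xs 0)) ≤
      ∑ t ∈ Finset.range (T + 1), (xs (t + 1) + xs t) ⬝ᵥ (A *ᵥ y t)) := by
  have hsymm : D.IsSymm := isHermitian_iff_isSymm.mp hD.isHermitian
  have hdet : IsUnit D.det := (isUnit_iff_isUnit_det D).mp hD.isUnit
  have hsum := hsymm.sum_range_add_dotProduct_eq_sub hdet hupd (T + 1)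
  have hfinal : 0 ≤ xs (T + 1) ⬝ᵥ (D⁻¹ *ᵥ xs (T + 1)) := by
    simpa using hD.inv.posSemidef.dotProduct_mulVec_nonneg (xs (T + 1))
  exact ⟨hsum, by linarith⟩
end

section
/- In a positive-negative definite game, alternating gradient descent conserves the perturbed energy: if x^{t+1} = x^t + D_η P A y^t and y^{t+1} = y^t - D_γ Q A^T x^{t+1}, where P commutes with D_η and Q commutes with D_γ, then ⟨x^{t+1}, P^{-1} D_η^{-1} x^{t+1}⟩ + ⟨y^{t+1}, Q^{-1} D_γ^{-1} y^{t+1}⟩ + ⟨x^{t+1}, A y^{t+1}⟩ = ⟨x^t, P^{-1} D_η^{-1} x^t⟩ + ⟨y^t, Q^{-1} D_γ^{-1} y^t⟩ + ⟨x^t, A y^t⟩. -/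
open Matrix

lemma symm_dot_aux {k : ℕ} (M : Matrix (Fin k) (Fin k) ℝ) (h : Mᵀ = M) (u v : Fin k → ℝ) :
    u ⬝ᵥ (M *ᵥ v) = v ⬝ᵥ (M *ᵥ u) := by
  rw [Matrix.dotProduct_mulVec, ← Matrix.mulVec_transpose, h, dotProduct_comm]

theorem posneg_energy_conservation {n m : ℕ}
    (P Dη : Matrix (Fin n) (Fin n) ℝ) (Q Dγ : Matrix (Fin m) (Fin m) ℝ)
    (hP : P.PosDef) (hQ : Q.PosDef) (hDη : Dη.PosDef) (hDγ : Dγ.PosDef)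
    (hPcomm : P * Dη = Dη * P) (hQcomm : Q * Dγ = Dγ * Q)
    (A : Matrix (Fin n) (Fin m) ℝ)
    (x x' : Fin n → ℝ) (y y' : Fin m → ℝ)
    (hx : x' = x + Dη *ᵥ (P *ᵥ (A *ᵥ y)))
    (hy : y' = y - Dγ *ᵥ (Q *ᵥ (Aᵀ *ᵥ x'))) :
    x' ⬝ᵥ ((P⁻¹ * Dη⁻¹) *ᵥ x') + y' ⬝ᵥ ((Q⁻¹ * Dγ⁻¹) *ᵥ y') + x' ⬝ᵥ (A *ᵥ y') =
      x ⬝ᵥ ((P⁻¹ * Dη⁻¹) *ᵥ x) + y ⬝ᵥ ((Q⁻¹ * Dγ⁻¹) *ᵥ y) + x ⬝ᵥ (A *ᵥ y) := by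
  have hPu : IsUnit P.det := hP.det_pos.ne'.isUnit
  have hQu : IsUnit Q.det := hQ.det_pos.ne'.isUnit
  have hDηu : IsUnit Dη.det := hDη.det_pos.ne'.isUnit
  have hDγu : IsUnit Dγ.det := hDγ.det_pos.ne'.isUnit
  have hPt : Pᵀ = P := by
    rw [← Matrix.conjTranspose_eq_transpose_of_trivial]; exact hP.isHermitian
  have hQt : Qᵀ = Q := by
    rw [← Matrix.conjTranspose_eq_transpose_of_trivial]; exact hQ.isHermitian
  have hDηt : Dηᵀ = Dη := by
    rw [← Matrix.conjTranspose_eq_transpose_of_trivial]; exact hDη.isHermitian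
  have hDγt : Dγᵀ = Dγ := by
    rw [← Matrix.conjTranspose_eq_transpose_of_trivial]; exact hDγ.isHermitian
  -- symmetry of the inverse products
  have hMt : (P⁻¹ * Dη⁻¹)ᵀ = P⁻¹ * Dη⁻¹ := by
    rw [Matrix.transpose_mul, Matrix.transpose_nonsing_inv, Matrix.transpose_nonsing_inv,
      hPt, hDηt, ← Matrix.mul_inv_rev, hPcomm, Matrix.mul_inv_rev]
  have hNt : (Q⁻¹ * Dγ⁻¹)ᵀ = Q⁻¹ * Dγ⁻¹ := by
    rw [Matrix.transpose_mul, Matrix.transpose_nonsing_inv, Matrix.transpose_nonsing_inv,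
      hQt, hDγt, ← Matrix.mul_inv_rev, hQcomm, Matrix.mul_inv_rev]
  -- cancellation
  have keyM : (P⁻¹ * Dη⁻¹) * (Dη * P) = 1 := by
    rw [mul_assoc P⁻¹ Dη⁻¹ (Dη * P), ← mul_assoc Dη⁻¹ Dη P,
      Matrix.nonsing_inv_mul _ hDηu, one_mul, Matrix.nonsing_inv_mul _ hPu]
  have hMcancel : ∀ v : Fin n → ℝ, (P⁻¹ * Dη⁻¹) *ᵥ (Dη *ᵥ (P *ᵥ v)) = v := by
    intro v
    rw [Matrix.mulVec_mulVec, Matrix.mulVec_mulVec, mul_assoc (P⁻¹ * Dη⁻¹) Dη P, keyM, Matrix.one_mulVec]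
  have keyN : (Q⁻¹ * Dγ⁻¹) * (Dγ * Q) = 1 := by
    rw [mul_assoc Q⁻¹ Dγ⁻¹ (Dγ * Q), ← mul_assoc Dγ⁻¹ Dγ Q,
      Matrix.nonsing_inv_mul _ hDγu, one_mul, Matrix.nonsing_inv_mul _ hQu]
  have hNcancel : ∀ w : Fin m → ℝ, (Q⁻¹ * Dγ⁻¹) *ᵥ (Dγ *ᵥ (Q *ᵥ w)) = w := by
    intro w
    rw [Matrix.mulVec_mulVec, Matrix.mulVec_mulVec, mul_assoc (Q⁻¹ * Dγ⁻¹) Dγ Q, keyN, Matrix.one_mulVec]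
  set d : Fin n → ℝ := Dη *ᵥ (P *ᵥ (A *ᵥ y)) with hd
  set e : Fin m → ℝ := Dγ *ᵥ (Q *ᵥ (Aᵀ *ᵥ x')) with he
  have hMd : (P⁻¹ * Dη⁻¹) *ᵥ d = A *ᵥ y := hMcancel _
  have hNe : (Q⁻¹ * Dγ⁻¹) *ᵥ e = Aᵀ *ᵥ x' := hNcancel _
  -- transpose identity: u ⬝ᵥ Aᵀ x' = x' ⬝ᵥ A u
  have hAt : ∀ u : Fin m → ℝ, u ⬝ᵥ (Aᵀ *ᵥ x') = x' ⬝ᵥ (A *ᵥ u) := by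
    intro u
    rw [Matrix.mulVec_transpose, Matrix.dotProduct_mulVec, dotProduct_comm]
  -- expand the x part
  have hX : x' ⬝ᵥ ((P⁻¹ * Dη⁻¹) *ᵥ x') =
      x ⬝ᵥ ((P⁻¹ * Dη⁻¹) *ᵥ x) + x ⬝ᵥ (A *ᵥ y) + x' ⬝ᵥ (A *ᵥ y) := by
    rw [hx]
    rw [Matrix.mulVec_add, dotProduct_add, add_dotProduct,
      add_dotProduct, hMd]
    have h1 : d ⬝ᵥ ((P⁻¹ * Dη⁻¹) *ᵥ x) = x ⬝ᵥ (A *ᵥ y) := by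
      rw [symm_dot_aux _ hMt, hMd]
    rw [h1, add_dotProduct]
  have hY : y' ⬝ᵥ ((Q⁻¹ * Dγ⁻¹) *ᵥ y') =
      y ⬝ᵥ ((Q⁻¹ * Dγ⁻¹) *ᵥ y) - x' ⬝ᵥ (A *ᵥ y) - x' ⬝ᵥ (A *ᵥ y') := by
    rw [hy]
    rw [Matrix.mulVec_sub, dotProduct_sub, sub_dotProduct,
      sub_dotProduct, hNe]
    have h1 : e ⬝ᵥ ((Q⁻¹ * Dγ⁻¹) *ᵥ y) = x' ⬝ᵥ (A *ᵥ y) := by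
      rw [symm_dot_aux _ hNt, hNe, hAt]
    have h2 : y ⬝ᵥ (Aᵀ *ᵥ x') = x' ⬝ᵥ (A *ᵥ y) := hAt y
    have h3 : e ⬝ᵥ (Aᵀ *ᵥ x') = x' ⬝ᵥ (A *ᵥ e) := hAt e
    rw [h1, h2, h3, Matrix.mulVec_sub, dotProduct_sub]
  rw [hX, hY]
  ring
end

section
/- In a positive-positive definite (coordination) game, alternating gradient descent preserves the energy ⟨x^t, P^{-1} D_η^{-1} x^t⟩ - ⟨y^t, Q^{-1} D_γ^{-1} y^t⟩ + ⟨x^t, A y^t⟩: i.e., if x^{t+1} = x^t + D_η P A y^t and y^{t+1} = y^t + D_γ Q A^T x^{t+1} with P commuting with D_η and Q with D_γ, then this quantity is the same at step t+1 as at step t. -/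
open Matrix

lemma quad_expand {n : ℕ} (B : Matrix (Fin n) (Fin n) ℝ) (hBs : Bᵀ = B)
    (hinv : IsUnit B.det) (u v : Fin n → ℝ) :
    (u + B *ᵥ v) ⬝ᵥ (B⁻¹ *ᵥ (u + B *ᵥ v)) =
      u ⬝ᵥ (B⁻¹ *ᵥ u) + 2 * (u ⬝ᵥ v) + v ⬝ᵥ (B *ᵥ v) := by
  have hBi : (B⁻¹)ᵀ = B⁻¹ := by rw [Matrix.transpose_nonsing_inv, hBs]
  have h1 : B⁻¹ *ᵥ (B *ᵥ v) = v := by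
    rw [Matrix.mulVec_mulVec, Matrix.nonsing_inv_mul B hinv, Matrix.one_mulVec]
  have h2 : (B *ᵥ v) ⬝ᵥ (B⁻¹ *ᵥ u) = v ⬝ᵥ u := by
    rw [Matrix.dotProduct_mulVec, ← hBi, Matrix.vecMul_transpose, h1]
  have h3 : u ⬝ᵥ v = v ⬝ᵥ u := dotProduct_comm u v
  have h4 : (B *ᵥ v) ⬝ᵥ v = v ⬝ᵥ (B *ᵥ v) := dotProduct_comm _ _
  simp only [Matrix.mulVec_add, dotProduct_add, add_dotProduct, h1, h2, h3, h4]
  ring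

theorem pospos_energy_conservation {n m : ℕ}
    (P Dη : Matrix (Fin n) (Fin n) ℝ) (Q Dγ : Matrix (Fin m) (Fin m) ℝ)
    (hP : P.PosDef) (hQ : Q.PosDef) (hDη : Dη.PosDef) (hDγ : Dγ.PosDef)
    (hPcomm : P * Dη = Dη * P) (hQcomm : Q * Dγ = Dγ * Q)
    (A : Matrix (Fin n) (Fin m) ℝ)
    (x x' : Fin n → ℝ) (y y' : Fin m → ℝ)
    (hx : x' = x + Dη *ᵥ (P *ᵥ (A *ᵥ y)))
    (hy : y' = y + Dγ *ᵥ (Q *ᵥ (Aᵀ *ᵥ x'))) :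
    x' ⬝ᵥ ((P⁻¹ * Dη⁻¹) *ᵥ x') - y' ⬝ᵥ ((Q⁻¹ * Dγ⁻¹) *ᵥ y') + x' ⬝ᵥ (A *ᵥ y') =
      x ⬝ᵥ ((P⁻¹ * Dη⁻¹) *ᵥ x) - y ⬝ᵥ ((Q⁻¹ * Dγ⁻¹) *ᵥ y) + x ⬝ᵥ (A *ᵥ y) := by
  set B := Dη * P with hB
  set C := Dγ * Q with hC
  have hPs : Pᵀ = P := hP.isHermitian
  have hDηs : Dηᵀ = Dη := hDη.isHermitian
  have hQs : Qᵀ = Q := hQ.isHermitian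
  have hDγs : Dγᵀ = Dγ := hDγ.isHermitian
  have hBs : Bᵀ = B := by rw [hB, Matrix.transpose_mul, hPs, hDηs, hPcomm]
  have hCs : Cᵀ = C := by rw [hC, Matrix.transpose_mul, hQs, hDγs, hQcomm]
  have hBinv : IsUnit B.det := by
    rw [hB, Matrix.det_mul]; exact (isUnit_iff_ne_zero.mpr (ne_of_gt hDη.det_pos)).mul (isUnit_iff_ne_zero.mpr (ne_of_gt hP.det_pos))
  have hCinv : IsUnit C.det := by
    rw [hC, Matrix.det_mul]; exact (isUnit_iff_ne_zero.mpr (ne_of_gt hDγ.det_pos)).mul (isUnit_iff_ne_zero.mpr (ne_of_gt hQ.det_pos))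
  have hPB : P⁻¹ * Dη⁻¹ = B⁻¹ := by rw [hB, Matrix.mul_inv_rev]
  have hQC : Q⁻¹ * Dγ⁻¹ = C⁻¹ := by rw [hC, Matrix.mul_inv_rev]
  have hx' : x' = x + B *ᵥ (A *ᵥ y) := by rw [hx, hB, ← Matrix.mulVec_mulVec]
  have hy' : y' = y + C *ᵥ (Aᵀ *ᵥ x') := by rw [hy, hC, ← Matrix.mulVec_mulVec]
  rw [hPB, hQC]
  -- E1
  have E1 : x' ⬝ᵥ (B⁻¹ *ᵥ x') = x ⬝ᵥ (B⁻¹ *ᵥ x) + 2 * (x ⬝ᵥ (A *ᵥ y))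
      + (A *ᵥ y) ⬝ᵥ (B *ᵥ (A *ᵥ y)) := by
    rw [hx']; exact quad_expand B hBs hBinv x (A *ᵥ y)
  have E2 : y' ⬝ᵥ (C⁻¹ *ᵥ y') = y ⬝ᵥ (C⁻¹ *ᵥ y) + 2 * (y ⬝ᵥ (Aᵀ *ᵥ x'))
      + (Aᵀ *ᵥ x') ⬝ᵥ (C *ᵥ (Aᵀ *ᵥ x')) := by
    rw [hy']; exact quad_expand C hCs hCinv y (Aᵀ *ᵥ x')
  have E3 : x' ⬝ᵥ (A *ᵥ y') = x' ⬝ᵥ (A *ᵥ y) + (Aᵀ *ᵥ x') ⬝ᵥ (C *ᵥ (Aᵀ *ᵥ x')) := by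
    rw [hy', Matrix.mulVec_add, dotProduct_add]
    congr 1
    rw [Matrix.dotProduct_mulVec, ← Matrix.mulVec_transpose]
  have E4 : x' ⬝ᵥ (A *ᵥ y) = x ⬝ᵥ (A *ᵥ y) + (A *ᵥ y) ⬝ᵥ (B *ᵥ (A *ᵥ y)) := by
    rw [hx', add_dotProduct, dotProduct_comm (B *ᵥ (A *ᵥ y))]
  have E5 : y ⬝ᵥ (Aᵀ *ᵥ x') = x' ⬝ᵥ (A *ᵥ y) := by
    rw [Matrix.dotProduct_mulVec, Matrix.vecMul_transpose, dotProduct_comm]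
  rw [E1, E2, E3, E4, E5, E4]
  ring
end

section
/- Under the assumptions of the positive-negative definite game with c := ‖A‖·‖P^{1/2} D_η^{1/2}‖·‖Q^{1/2} D_γ^{1/2}‖ < 2, the trajectory of alternating gradient descent is bounded: for all t, ‖x^t‖²_{P^{-1}D_η^{-1}} + ‖y^t‖²_{Q^{-1}D_γ^{-1}} ≤ (‖x^0‖²_{P^{-1}D_η^{-1}} + ‖y^0‖²_{Q^{-1}D_γ^{-1}} + ⟨x^0, A y^0⟩) / (1 - c/2). -/
/-!
Alternating gradient descent conserves the energy
`E(x, y) = ‖x‖²_{(D_η P)⁻¹} + ‖y‖²_{(D_γ Q)⁻¹} + ⟨x, A y⟩` exactly. Because the factors commute,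
`S = P^{1/2} D_η^{1/2}` and `T = Q^{1/2} D_γ^{1/2}` are symmetric with `S² = D_η P`, `T² = D_γ Q`;
in the coordinates `u = S⁻¹ x`, `v = T⁻¹ y` both weighted norms become Euclidean and the cross term
becomes `⟨u, (S A T) v⟩`. Cauchy–Schwarz and AM–GM bound it below by `-(c/2)(‖u‖² + ‖v‖²)`, so
`E⁰ = Eᵗ ≥ (1 - c/2)(‖xᵗ‖² + ‖yᵗ‖²)`.
-/

open Matrix

section OldSqrt

open scoped ComplexOrder

/-- The positive semidefinite square root of a positive semidefinite matrix
(the definition `Matrix.PosSemidef.sqrt` of the older Mathlib, since removed). -/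
noncomputable def Matrix.PosSemidef.sqrt {n 𝕜 : Type*} [Fintype n] [DecidableEq n] [RCLike 𝕜]
    {A : Matrix n n 𝕜} (hA : A.PosSemidef) : Matrix n n 𝕜 :=
  hA.1.eigenvectorUnitary.1 * diagonal ((↑) ∘ (fun x => Real.sqrt x) ∘ hA.1.eigenvalues) *
    (star hA.1.eigenvectorUnitary : Matrix n n 𝕜)

end OldSqrt

/-- Operator norm of a matrix induced by the Euclidean norms. -/
noncomputable def matOpNorm {n m : ℕ} (A : Matrix (Fin n) (Fin m) ℝ) : ℝ :=
  ‖LinearMap.toContinuousLinearMap (Matrix.toEuclideanLin A)‖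

open scoped ComplexOrder Matrix.Norms.L2Operator

namespace Matrix

variable {n 𝕜 : Type*} [Fintype n] [DecidableEq n] [RCLike 𝕜] {A B : Matrix n n 𝕜}

namespace PosSemidef

theorem sqrt_eq_cfc (hA : A.PosSemidef) : hA.sqrt = cfc Real.sqrt A := by
  rw [hA.1.cfc_eq, IsHermitian.cfc, Unitary.conjStarAlgAut_apply]
  rfl

theorem isHermitian_sqrt (hA : A.PosSemidef) : hA.sqrt.IsHermitian := by
  rw [sqrt_eq_cfc]
  exact cfc_predicate _ _

theorem sqrt_mul_sqrt (hA : A.PosSemidef) : hA.sqrt * hA.sqrt = A := by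
  rw [sqrt_eq_cfc, ← cfc_mul _ _ A]
  conv_rhs => rw [← cfc_id ℝ A hA.1.isSelfAdjoint]
  refine cfc_congr fun x hx => ?_
  obtain ⟨i, rfl⟩ := hA.1.spectrum_real_eq_range_eigenvalues ▸ hx
  exact Real.mul_self_sqrt (hA.eigenvalues_nonneg i)

theorem commute_sqrt (hA : A.PosSemidef) (h : Commute A B) : Commute hA.sqrt B := by
  rw [sqrt_eq_cfc]
  exact h.cfc_real _

theorem commute_sqrt_sqrt (hA : A.PosSemidef) (hB : B.PosSemidef) (h : Commute A B) :
    Commute hA.sqrt hB.sqrt :=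
  (hB.commute_sqrt (hA.commute_sqrt h).symm).symm

theorem isHermitian_sqrt_mul_sqrt (hA : A.PosSemidef) (hB : B.PosSemidef) (h : Commute A B) :
    (hA.sqrt * hB.sqrt).IsHermitian := by
  rw [IsHermitian, conjTranspose_mul, hA.isHermitian_sqrt.eq, hB.isHermitian_sqrt.eq]
  exact (hA.commute_sqrt_sqrt hB h).symm.eq

theorem sqrt_mul_sqrt_mul_self (hA : A.PosSemidef) (hB : B.PosSemidef) (h : Commute A B) :
    hA.sqrt * hB.sqrt * (hA.sqrt * hB.sqrt) = A * B := by
  rw [(hA.commute_sqrt_sqrt hB h).symm.mul_mul_mul_comm, hA.sqrt_mul_sqrt, hB.sqrt_mul_sqrt]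

end PosSemidef

theorem PosDef.isUnit_det_sqrt_mul_sqrt (hA : A.PosDef) (hB : B.PosDef) (h : Commute A B) :
    IsUnit (hA.posSemidef.sqrt * hB.posSemidef.sqrt).det := by
  refine isUnit_of_mul_isUnit_left (y := (hA.posSemidef.sqrt * hB.posSemidef.sqrt).det) ?_
  rw [← det_mul, hA.posSemidef.sqrt_mul_sqrt_mul_self hB.posSemidef h, ← isUnit_iff_isUnit_det]
  exact hA.isUnit.mul hB.isUnit

end Matrix

section Energy

variable {ι κ R : Type*} [Fintype ι] [Fintype κ] [CommRing R]

/-- With `G = (D_η P)⁻¹` and `H = (D_γ Q)⁻¹` this is the energy `E` of the paper. -/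
def altGDEnergy (G : Matrix ι ι R) (H : Matrix κ κ R) (A : Matrix ι κ R) (x : ι → R)
    (y : κ → R) : R :=
  x ⬝ᵥ G *ᵥ x + y ⬝ᵥ H *ᵥ y + x ⬝ᵥ A *ᵥ y

variable [DecidableEq ι] [DecidableEq κ]

theorem dotProduct_mulVec_add_mulVec_self {G M : Matrix ι ι R} (hG : Gᵀ = G) (hGM : G * M = 1)
    (x w : ι → R) :
    (x + M *ᵥ w) ⬝ᵥ G *ᵥ (x + M *ᵥ w) = x ⬝ᵥ G *ᵥ x + 2 * (x ⬝ᵥ w) + w ⬝ᵥ M *ᵥ w := by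
  have hGMw : G *ᵥ M *ᵥ w = w := by rw [mulVec_mulVec, hGM, one_mulVec]
  have hMwG : (M *ᵥ w) ⬝ᵥ G *ᵥ x = x ⬝ᵥ w := by
    rw [← hG, dotProduct_transpose_mulVec, hGMw]
  simp only [mulVec_add, dotProduct_add, add_dotProduct, hGMw, hMwG, dotProduct_comm (M *ᵥ w) w]
  ring

theorem dotProduct_mulVec_sub_mulVec_self {G M : Matrix ι ι R} (hG : Gᵀ = G) (hGM : G * M = 1)
    (x w : ι → R) :
    (x - M *ᵥ w) ⬝ᵥ G *ᵥ (x - M *ᵥ w) = x ⬝ᵥ G *ᵥ x - 2 * (x ⬝ᵥ w) + w ⬝ᵥ M *ᵥ w := by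
  rw [sub_eq_add_neg, ← mulVec_neg, dotProduct_mulVec_add_mulVec_self hG hGM, mulVec_neg,
    dotProduct_neg, neg_dotProduct, dotProduct_neg, neg_neg]
  ring

variable {G M : Matrix ι ι R} {H N : Matrix κ κ R}

theorem altGDEnergy_step (hG : Gᵀ = G) (hGM : G * M = 1) (hH : Hᵀ = H) (hHN : H * N = 1)
    (A : Matrix ι κ R) {x x' : ι → R} (y : κ → R) (hx : x' = x + M *ᵥ A *ᵥ y) :
    altGDEnergy G H A x' (y - N *ᵥ Aᵀ *ᵥ x') = altGDEnergy G H A x y := by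
  have hyz : y ⬝ᵥ Aᵀ *ᵥ x' = x ⬝ᵥ A *ᵥ y + (A *ᵥ y) ⬝ᵥ M *ᵥ A *ᵥ y := by
    rw [dotProduct_transpose_mulVec, hx, add_dotProduct, dotProduct_comm (M *ᵥ _)]
  have hcross : x' ⬝ᵥ A *ᵥ (y - N *ᵥ Aᵀ *ᵥ x') =
      y ⬝ᵥ Aᵀ *ᵥ x' - (Aᵀ *ᵥ x') ⬝ᵥ N *ᵥ Aᵀ *ᵥ x' := by
    rw [mulVec_sub, dotProduct_sub, ← dotProduct_transpose_mulVec A y x',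
      ← dotProduct_transpose_mulVec A (N *ᵥ _) x', dotProduct_comm (N *ᵥ _)]
  unfold altGDEnergy
  rw [dotProduct_mulVec_sub_mulVec_self hH hHN, hcross, hyz, hx,
    dotProduct_mulVec_add_mulVec_self hG hGM]
  ring

theorem altGDEnergy_eq_of_iterate (hG : Gᵀ = G) (hGM : G * M = 1) (hH : Hᵀ = H)
    (hHN : H * N = 1) (A : Matrix ι κ R) {xs : ℕ → ι → R} {ys : ℕ → κ → R}
    (hx : ∀ t, xs (t + 1) = xs t + M *ᵥ A *ᵥ ys t)
    (hy : ∀ t, ys (t + 1) = ys t - N *ᵥ Aᵀ *ᵥ xs (t + 1)) (t : ℕ) :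
    altGDEnergy G H A (xs t) (ys t) = altGDEnergy G H A (xs 0) (ys 0) := by
  induction t with
  | zero => rfl
  | succ t ih => rw [hy, altGDEnergy_step hG hGM hH hHN A _ (hx t), ih]

end Energy

section ChangeOfVariables

variable {ι κ R : Type*} [Fintype ι] [Fintype κ] [DecidableEq ι] [DecidableEq κ] [CommRing R]
  {S : Matrix ι ι R} {T : Matrix κ κ R}

theorem dotProduct_mul_self_inv_mulVec (hS : Sᵀ = S) (x : ι → R) :
    x ⬝ᵥ (S * S)⁻¹ *ᵥ x = (S⁻¹ *ᵥ x) ⬝ᵥ S⁻¹ *ᵥ x := by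
  rw [Matrix.mul_inv_rev, ← mulVec_mulVec, ← dotProduct_transpose_mulVec, transpose_nonsing_inv,
    hS]

theorem dotProduct_mulVec_eq_inv_mulVec (hS : Sᵀ = S) (hSu : IsUnit S.det) (hTu : IsUnit T.det)
    (A : Matrix ι κ R) (x : ι → R) (y : κ → R) :
    x ⬝ᵥ A *ᵥ y = (S⁻¹ *ᵥ x) ⬝ᵥ (S * A * T) *ᵥ T⁻¹ *ᵥ y := by
  rw [← mulVec_mulVec, ← mulVec_mulVec, mulVec_mulVec (M := T), mul_nonsing_inv _ hTu,
    one_mulVec, dotProduct_mulVec (S⁻¹ *ᵥ x), ← mulVec_transpose, hS, mulVec_mulVec,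
    mul_nonsing_inv _ hSu, one_mulVec]

end ChangeOfVariables

section OperatorNorm

theorem matOpNorm_eq_l2_opNorm {n m : ℕ} (B : Matrix (Fin n) (Fin m) ℝ) : matOpNorm B = ‖B‖ :=
  rfl

variable {ι κ : Type*} [Fintype ι] [Fintype κ]

theorem norm_toLp_sq (u : ι → ℝ) : ‖WithLp.toLp 2 u‖ ^ 2 = u ⬝ᵥ u := by
  rw [← real_inner_self_eq_norm_sq, EuclideanSpace.inner_toLp_toLp, star_trivial]

variable [DecidableEq κ]

theorem dotProduct_mulVec_le_l2_opNorm_mul (B : Matrix ι κ ℝ) (u : ι → ℝ) (v : κ → ℝ) :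
    u ⬝ᵥ B *ᵥ v ≤ ‖B‖ * (‖WithLp.toLp 2 u‖ * ‖WithLp.toLp 2 v‖) :=
  calc u ⬝ᵥ B *ᵥ v = inner ℝ (WithLp.toLp 2 (B *ᵥ v)) (WithLp.toLp 2 u) := by
        rw [EuclideanSpace.inner_toLp_toLp, star_trivial]
    _ ≤ ‖WithLp.toLp 2 (B *ᵥ v)‖ * ‖WithLp.toLp 2 u‖ := real_inner_le_norm _ _
    _ ≤ ‖B‖ * ‖WithLp.toLp 2 v‖ * ‖WithLp.toLp 2 u‖ := by
        gcongr
        exact B.l2_opNorm_mulVec (WithLp.toLp 2 v)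
    _ = ‖B‖ * (‖WithLp.toLp 2 u‖ * ‖WithLp.toLp 2 v‖) := by ring

theorem dotProduct_mulVec_le_of_l2_opNorm_le {B : Matrix ι κ ℝ} {c : ℝ} (hB : ‖B‖ ≤ c)
    (u : ι → ℝ) (v : κ → ℝ) : u ⬝ᵥ B *ᵥ v ≤ c / 2 * (u ⬝ᵥ u + v ⬝ᵥ v) := by
  have hc : 0 ≤ c := (norm_nonneg B).trans hB
  have hamgm := two_mul_le_add_sq ‖WithLp.toLp 2 u‖ ‖WithLp.toLp 2 v‖
  rw [norm_toLp_sq, norm_toLp_sq] at hamgm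
  calc u ⬝ᵥ B *ᵥ v ≤ ‖B‖ * (‖WithLp.toLp 2 u‖ * ‖WithLp.toLp 2 v‖) :=
        dotProduct_mulVec_le_l2_opNorm_mul B u v
    _ ≤ c * (‖WithLp.toLp 2 u‖ * ‖WithLp.toLp 2 v‖) := by gcongr
    _ ≤ c / 2 * (u ⬝ᵥ u + v ⬝ᵥ v) := by nlinarith

variable [DecidableEq ι]

theorem l2_opNorm_mul_mul_le {μ ν : Type*} [Fintype μ] [Fintype ν] [DecidableEq ν]
    (S : Matrix μ ι ℝ) (A : Matrix ι κ ℝ)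
    (T : Matrix κ ν ℝ) : ‖S * A * T‖ ≤ ‖S‖ * ‖A‖ * ‖T‖ :=
  (l2_opNorm_mul _ _).trans (by gcongr; exact l2_opNorm_mul _ _)

theorem neg_dotProduct_mulVec_le {S : Matrix ι ι ℝ} {T : Matrix κ κ ℝ} (hS : Sᵀ = S)
    (hT : Tᵀ = T) (hSu : IsUnit S.det) (hTu : IsUnit T.det) {A : Matrix ι κ ℝ} {c : ℝ}
    (hc : ‖S * A * T‖ ≤ c) (x : ι → ℝ) (y : κ → ℝ) :
    -(x ⬝ᵥ A *ᵥ y) ≤ c / 2 * (x ⬝ᵥ (S * S)⁻¹ *ᵥ x + y ⬝ᵥ (T * T)⁻¹ *ᵥ y) := by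
  have hv : (T⁻¹ *ᵥ y) ⬝ᵥ T⁻¹ *ᵥ y = (-(T⁻¹ *ᵥ y)) ⬝ᵥ -(T⁻¹ *ᵥ y) := by
    rw [neg_dotProduct, dotProduct_neg, neg_neg]
  rw [dotProduct_mulVec_eq_inv_mulVec hS hSu hTu, ← dotProduct_neg, ← mulVec_neg,
    dotProduct_mul_self_inv_mulVec hS, dotProduct_mul_self_inv_mulVec hT, hv]
  exact dotProduct_mulVec_le_of_l2_opNorm_le hc _ _

end OperatorNorm

theorem posneg_bounded_orbits {n m : ℕ}
    (A : Matrix (Fin n) (Fin m) ℝ)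
    (P Dη : Matrix (Fin n) (Fin n) ℝ) (Q Dγ : Matrix (Fin m) (Fin m) ℝ)
    (hP : P.PosDef) (hDη : Dη.PosDef) (hQ : Q.PosDef) (hDγ : Dγ.PosDef)
    (hPcomm : P * Dη = Dη * P) (hQcomm : Q * Dγ = Dγ * Q)
    (c : ℝ)
    (hc : c = matOpNorm A * matOpNorm (hP.posSemidef.sqrt * hDη.posSemidef.sqrt) *
        matOpNorm (hQ.posSemidef.sqrt * hDγ.posSemidef.sqrt))
    (hc2 : c < 2)
    (xs : ℕ → Fin n → ℝ) (ys : ℕ → Fin m → ℝ)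
    (hx : ∀ t, xs (t + 1) = xs t + Dη *ᵥ (P *ᵥ (A *ᵥ ys t)))
    (hy : ∀ t, ys (t + 1) = ys t - Dγ *ᵥ (Q *ᵥ (Aᵀ *ᵥ xs (t + 1)))) :
    ∀ t, xs t ⬝ᵥ ((P⁻¹ * Dη⁻¹) *ᵥ xs t) + ys t ⬝ᵥ ((Q⁻¹ * Dγ⁻¹) *ᵥ ys t) ≤
      (xs 0 ⬝ᵥ ((P⁻¹ * Dη⁻¹) *ᵥ xs 0) + ys 0 ⬝ᵥ ((Q⁻¹ * Dγ⁻¹) *ᵥ ys 0) +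
          xs 0 ⬝ᵥ (A *ᵥ ys 0)) / (1 - c / 2) := by
  set S := hP.posSemidef.sqrt * hDη.posSemidef.sqrt
  set T := hQ.posSemidef.sqrt * hDγ.posSemidef.sqrt
  have hS : Sᵀ = S := (isHermitian_iff_isSymm.mp <|
    hP.posSemidef.isHermitian_sqrt_mul_sqrt hDη.posSemidef hPcomm).eq
  have hT : Tᵀ = T := (isHermitian_iff_isSymm.mp <|
    hQ.posSemidef.isHermitian_sqrt_mul_sqrt hDγ.posSemidef hQcomm).eq
  have hSS : S * S = Dη * P :=
    (hP.posSemidef.sqrt_mul_sqrt_mul_self hDη.posSemidef hPcomm).trans hPcomm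
  have hTT : T * T = Dγ * Q :=
    (hQ.posSemidef.sqrt_mul_sqrt_mul_self hDγ.posSemidef hQcomm).trans hQcomm
  have hSu : IsUnit S.det := hP.isUnit_det_sqrt_mul_sqrt hDη hPcomm
  have hTu : IsUnit T.det := hQ.isUnit_det_sqrt_mul_sqrt hDγ hQcomm
  have hE := altGDEnergy_eq_of_iterate (xs := xs) (ys := ys)
    (by rw [transpose_nonsing_inv, transpose_mul, hS])
    (nonsing_inv_mul _ (det_mul S S ▸ hSu.mul hSu))
    (by rw [transpose_nonsing_inv, transpose_mul, hT])
    (nonsing_inv_mul _ (det_mul T T ▸ hTu.mul hTu))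
    A (fun t => by rw [hx, hSS, mulVec_mulVec]) (fun t => by rw [hy, hTT, mulVec_mulVec])
  have hcST : ‖S * A * T‖ ≤ c := by
    rw [hc, matOpNorm_eq_l2_opNorm, matOpNorm_eq_l2_opNorm, matOpNorm_eq_l2_opNorm]
    exact (l2_opNorm_mul_mul_le S A T).trans_eq (by ring)
  intro t
  have hcross := neg_dotProduct_mulVec_le hS hT hSu hTu hcST (xs t) (ys t)
  rw [← Matrix.mul_inv_rev, ← Matrix.mul_inv_rev, ← hSS, ← hTT, le_div_iff₀ (by linarith)]
  unfold altGDEnergy at hE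
  linarith [hE t]
end

section
/- For the coordination game map (x, y) ↦ (x + y, x + 2y) on ℝ², the images of the square's extreme points satisfy: starting from E^0 = {±(-1, 1), ±(1, 1)}, after t iterations the extreme points are {±(F_{2t-2}, F_{2t-1}), ±(F_{2t+1}, F_{2t+2})}, where F_k is the k-th Fibonacci number (with F_{-2} = -1, F_{-1} = 1, F_1 = F_2 = 1). -/
/-- Fibonacci numbers extended to negative indices via `F_{-k} = (-1)^{k+1} F_k`. -/
def fibZ (k : ℤ) : ℤ :=
  if 0 ≤ k then Nat.fib k.toNat else (-1) ^ ((-k).toNat + 1) * Nat.fib (-k).toNat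

lemma fibZ_ofNat (n : ℕ) : fibZ n = Nat.fib n := by simp [fibZ]

lemma fibZ_rec {k : ℤ} (hk : -2 ≤ k) : fibZ (k + 2) = fibZ k + fibZ (k + 1) := by
  rcases eq_or_lt_of_le hk with h | h
  · subst_vars; decide
  rcases eq_or_lt_of_le (show -1 ≤ k by omega) with h2 | h2
  · subst_vars; decide
  obtain ⟨n, rfl⟩ : ∃ n : ℕ, k = n := ⟨k.toNat, by omega⟩
  have h1 : (n : ℤ) + 1 = ((n + 1 : ℕ) : ℤ) := by push_cast; ring
  have h2 : (n : ℤ) + 2 = ((n + 2 : ℕ) : ℤ) := by push_cast; ring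
  rw [h1, h2, fibZ_ofNat, fibZ_ofNat, fibZ_ofNat, Nat.fib_add_two]
  push_cast; ring

lemma fibZ_step1 {k : ℤ} (hk : -2 ≤ k) : fibZ k + fibZ (k + 1) = fibZ (k + 2) :=
  (fibZ_rec hk).symm

lemma fibZ_step2 {k : ℤ} (hk : -2 ≤ k) : fibZ k + 2 * fibZ (k + 1) = fibZ (k + 3) := by
  have h1 := fibZ_rec hk
  have h2 := fibZ_rec (show -2 ≤ k + 1 by omega)
  have e : k + 1 + 2 = k + 3 := by ring
  have e2 : k + 1 + 1 = k + 2 := by ring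
  rw [e, e2] at h2
  omega

theorem coordination_extreme_points :
    ∀ t : ℕ,
      (fun p : ℝ × ℝ => (p.1 + p.2, p.1 + 2 * p.2))^[t] ''
          ({((-1 : ℝ), (1 : ℝ)), (1, -1), (1, 1), (-1, -1)} : Set (ℝ × ℝ)) =
        {(((fibZ (2 * (t : ℤ) - 2) : ℝ)), ((fibZ (2 * (t : ℤ) - 1) : ℝ))),
          (-((fibZ (2 * (t : ℤ) - 2) : ℝ)), -((fibZ (2 * (t : ℤ) - 1) : ℝ))),
          (((fibZ (2 * (t : ℤ) + 1) : ℝ)), ((fibZ (2 * (t : ℤ) + 2) : ℝ))),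
          (-((fibZ (2 * (t : ℤ) + 1) : ℝ)), -((fibZ (2 * (t : ℤ) + 2) : ℝ)))} := by
  intro t
  induction t with
  | zero =>
    norm_num [fibZ, show (2:ℤ).toNat = 2 from rfl, Nat.fib]
  | succ t ih =>
    rw [Function.iterate_succ', Set.image_comp, ih]
    have cast1 : ∀ k : ℤ, -2 ≤ k →
        (fibZ k : ℝ) + fibZ (k + 1) = fibZ (k + 2) := by
      intro k hk; exact_mod_cast congrArg (Int.cast : ℤ → ℝ) (fibZ_step1 hk)
    have cast2 : ∀ k : ℤ, -2 ≤ k →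
        (fibZ k : ℝ) + 2 * fibZ (k + 1) = fibZ (k + 3) := by
      intro k hk; exact_mod_cast congrArg (Int.cast : ℤ → ℝ) (fibZ_step2 hk)
    have iA : (fibZ (2 * (t : ℤ) - 2) : ℝ) + fibZ (2 * (t : ℤ) - 1) =
        fibZ (2 * ((t : ℕ) + 1 : ℕ) - 2) := by
      have := cast1 (2 * (t : ℤ) - 2) (by omega)
      convert this using 3 <;> push_cast <;> ring
    have iB : (fibZ (2 * (t : ℤ) - 2) : ℝ) + 2 * fibZ (2 * (t : ℤ) - 1) =
        fibZ (2 * ((t : ℕ) + 1 : ℕ) - 1) := by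
      have := cast2 (2 * (t : ℤ) - 2) (by omega)
      convert this using 3 <;> push_cast <;> ring
    have iC : (fibZ (2 * (t : ℤ) + 1) : ℝ) + fibZ (2 * (t : ℤ) + 2) =
        fibZ (2 * ((t : ℕ) + 1 : ℕ) + 1) := by
      have := cast1 (2 * (t : ℤ) + 1) (by omega)
      convert this using 3 <;> push_cast <;> ring
    have iD : (fibZ (2 * (t : ℤ) + 1) : ℝ) + 2 * fibZ (2 * (t : ℤ) + 2) =
        fibZ (2 * ((t : ℕ) + 1 : ℕ) + 2) := by
      have := cast2 (2 * (t : ℤ) + 1) (by omega)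
      convert this using 3 <;> push_cast <;> ring
    have negpair : ∀ a b : ℝ, (-a + -b, -a + 2 * -b) = (-(a + b), -(a + 2 * b)) := by
      intro a b; rw [Prod.mk.injEq]; constructor <;> ring
    simp only [Set.image_insert_eq, Set.image_singleton, negpair]
    rw [iA, iB, iC, iD]
end
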